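/- arXiv:1701.04772 — 3 statements merged into one kernel-verified Lean document; each statement's English description precedes it below -/
import Mathlib

section
/- In the algebraic model of a Lie algebroid, if the R-module L is faithful, then the anchor is a homomorphism of Lie algebras: for all X, Y ∈ L and all f ∈ R, ρ(⟦X,Y⟧)(f) = ρ(X)(ρ(Y)(f)) − ρ(Y)(ρ(X)(f)). -/
/-!
Expanding `⁅⁅X, Y⁆, f • Z⁆` once by the Leibniz rule for `⁅X, Y⁆`, and once through
`⁅⁅X, Y⁆, W⁆ = ⁅X, ⁅Y, W⁆⁆ - ⁅Y, ⁅X, W⁆⁆` and the Leibniz rule applied twice, shows that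
`(ρ ⁅X, Y⁆ f - (ρ X (ρ Y f) - ρ Y (ρ X f))) • Z = 0` for every `Z`; faithfulness concludes.
-/

section Leibniz

variable {R L : Type*} [Ring R] [LieRing L] [Module R L] {ρ : L → R → R}

theorem lie_lie_smul_of_leibniz
    (leibniz : ∀ (X Y : L) (f : R), ⁅X, f • Y⁆ = f • ⁅X, Y⁆ + ρ X f • Y) (X Y Z : L) (f : R) :
    ⁅X, ⁅Y, f • Z⁆⁆ = f • ⁅X, ⁅Y, Z⁆⁆ + ρ X f • ⁅Y, Z⁆ + (ρ Y f • ⁅X, Z⁆ + ρ X (ρ Y f) • Z) := by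
  rw [leibniz Y, lie_add, leibniz X, leibniz X]

theorem lie_bracket_smul_of_leibniz
    (leibniz : ∀ (X Y : L) (f : R), ⁅X, f • Y⁆ = f • ⁅X, Y⁆ + ρ X f • Y) (X Y Z : L) (f : R) :
    ⁅⁅X, Y⁆, f • Z⁆ = f • ⁅⁅X, Y⁆, Z⁆ + (ρ X (ρ Y f) - ρ Y (ρ X f)) • Z := by
  rw [lie_lie, lie_lie, lie_lie_smul_of_leibniz leibniz, lie_lie_smul_of_leibniz leibniz,
    smul_sub, sub_smul]
  abel

theorem anchor_lie_smul_of_leibniz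
    (leibniz : ∀ (X Y : L) (f : R), ⁅X, f • Y⁆ = f • ⁅X, Y⁆ + ρ X f • Y) (X Y Z : L) (f : R) :
    ρ ⁅X, Y⁆ f • Z = (ρ X (ρ Y f) - ρ Y (ρ X f)) • Z := by
  have h := lie_bracket_smul_of_leibniz leibniz X Y Z f
  rw [leibniz] at h
  exact add_left_cancel h

end Leibniz

theorem lieAlgebroid_anchor_is_lie_hom_general
    {R L : Type*} [CommRing R] [Algebra ℝ R]
    [LieRing L] [Module R L]
    (ρ : L → Derivation ℝ R R)
    (leibniz : ∀ (X Y : L) (f : R), ⁅X, f • Y⁆ = f • ⁅X, Y⁆ + ρ X f • Y)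
    (faithful : ∀ f : R, (∀ Z : L, f • Z = 0) → f = 0) :
    ∀ (X Y : L) (f : R), ρ ⁅X, Y⁆ f = ρ X (ρ Y f) - ρ Y (ρ X f) := by
  intro X Y f
  refine sub_eq_zero.mp (faithful _ fun Z => ?_)
  rw [sub_smul, sub_eq_zero]
  exact anchor_lie_smul_of_leibniz (ρ := fun X => ρ X) leibniz X Y Z f

/-- In the algebraic model of a Lie algebroid, if the `R`-module `L` is
faithful, then the anchor is a homomorphism of Lie algebras:
`ρ(⁅X,Y⁆)(f) = ρ(X)(ρ(Y)(f)) − ρ(Y)(ρ(X)(f))` for all `X, Y ∈ L`, `f ∈ R`. -/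
theorem lieAlgebroid_anchor_is_lie_hom
    {R L : Type*} [CommRing R] [Algebra ℝ R]
    [LieRing L] [Module ℝ L] [LieAlgebra ℝ L] [Module R L]
    (ρ : L → Derivation ℝ R R)
    (leibniz : ∀ (X Y : L) (f : R), ⁅X, f • Y⁆ = f • ⁅X, Y⁆ + ρ X f • Y)
    (faithful : ∀ f : R, (∀ Z : L, f • Z = 0) → f = 0) :
    ∀ (X Y : L) (f : R), ρ ⁅X, Y⁆ f = ρ X (ρ Y f) - ρ Y (ρ X f) :=
  lieAlgebroid_anchor_is_lie_hom_general ρ leibniz faithful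
end

section
/- Pointwise solvability criterion for the constrained presymplectic equation (general step of the constraint algorithm): for a covector α ∈ E* and a linear subspace F of E, there exists e ∈ F with Ω(e, ·) = α if and only if α(e') = 0 for every e' ∈ F^⊥. -/
/-! Since `Ω` is alternating, hence reflexive, `F^⊥` is the preannihilator in `E` of
`♭_Ω(F) ⊆ E*`. In finite dimension a subspace of `E*` is the annihilator of its
preannihilator, so `α` vanishes on `F^⊥` exactly when `α ∈ ♭_Ω(F)`. -/

/-- The Ω-orthogonal complement `F^⊥ = {e ∈ E : Ω(e,f) = 0 for all f ∈ F}` of a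
subspace `F` with respect to a bilinear form `Ω`. -/
def presympPerp {E : Type*} [AddCommGroup E] [Module ℝ E]
    (Ω : E →ₗ[ℝ] E →ₗ[ℝ] ℝ) (F : Submodule ℝ E) : Submodule ℝ E where
  carrier := {e | ∀ f ∈ F, Ω e f = 0}
  add_mem' := by
    intro a b ha hb f hf
    simp [ha f hf, hb f hf]
  zero_mem' := by
    intro f hf
    simp
  smul_mem' := by
    intro c a ha f hf
    simp [ha f hf]

theorem presympPerp_eq_dualCoannihilator_map {E : Type*} [AddCommGroup E] [Module ℝ E]
    {Ω : E →ₗ[ℝ] E →ₗ[ℝ] ℝ} (hΩ : Ω.IsRefl) (F : Submodule ℝ E) :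
    presympPerp Ω F = (F.map Ω).dualCoannihilator := by
  ext e
  rw [Submodule.mem_dualCoannihilator]
  constructor
  · rintro he _ ⟨f, hf, rfl⟩
    exact hΩ e f (he f hf)
  · exact fun he f hf => hΩ f e (he (Ω f) ⟨f, hf, rfl⟩)

/-- Pointwise solvability criterion for the constrained presymplectic
equation (general step of the constraint algorithm): for a covector `α ∈ E*` and a
linear subspace `F` of `E`, there exists `e ∈ F` with `Ω(e, ·) = α` if and only if
`α(e') = 0` for every `e' ∈ F^⊥`. -/
theorem presymp_constrained_solvable_iff {E : Type*} [AddCommGroup E] [Module ℝ E]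
    [FiniteDimensional ℝ E] (Ω : E →ₗ[ℝ] E →ₗ[ℝ] ℝ)
    (hΩ : ∀ e : E, Ω e e = 0) (F : Submodule ℝ E) (α : E →ₗ[ℝ] ℝ) :
    (∃ e ∈ F, Ω e = α) ↔ ∀ e' ∈ presympPerp Ω F, α e' = 0 := by
  calc (∃ e ∈ F, Ω e = α) ↔ α ∈ F.map Ω := Iff.rfl
    _ ↔ α ∈ (F.map Ω).dualCoannihilator.dualAnnihilator := by
      rw [Subspace.dualCoannihilator_dualAnnihilator_eq]
    _ ↔ ∀ e' ∈ presympPerp Ω F, α e' = 0 := by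
      rw [presympPerp_eq_dualCoannihilator_map (LinearMap.IsAlt.isRefl hΩ),
        Submodule.mem_dualAnnihilator]
end

section
/- Reduction of the rigid-body optimality system to the cubic-spline equation on SO(3): if Ω, p, p̄ : ℝ → ℝ³ are differentiable curves satisfying, for all t, p'(t) = Ω(t) × p(t), Ω'(t) = p̄(t), and p̄'(t) = −p(t), then Ω is three times differentiable and satisfies the third-order equation Ω'''(t) = Ω(t) × Ω''(t), i.e. componentwise Ω'''₁ = Ω₂Ω̈₃ − Ω₃Ω̈₂, Ω'''₂ = Ω₃Ω̈₁ − Ω₁Ω̈₃, Ω'''₃ = Ω₁Ω̈₂ − Ω₂Ω̈₁. -/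
theorem deriv_deriv_eq_of_hasDerivAt {E : Type*} [NormedAddCommGroup E] [NormedSpace ℝ E]
    {f g h : ℝ → E} (hf : ∀ t, HasDerivAt f (g t) t) (hg : ∀ t, HasDerivAt g (h t) t) :
    deriv (deriv f) = h := by
  have hderiv_f : deriv f = g := funext fun t => (hf t).deriv
  rw [hderiv_f]
  exact funext fun t => (hg t).deriv

/-- Reduction of the rigid-body optimality system to the cubic-spline
equation on SO(3): if `Ω, p, pbar : ℝ → ℝ³` are differentiable curves satisfying, for
all `t`, `p' = Ω × p`, `Ω' = pbar` and `pbar' = −p`, then `Ω` is three times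
differentiable and satisfies the third-order equation `Ω''' = Ω × Ω''`. -/
theorem rigidBody_cubic_spline_equation
    (Ω p pbar : ℝ → (Fin 3 → ℝ))
    (hp : ∀ t : ℝ, HasDerivAt p (crossProduct (Ω t) (p t)) t)
    (hΩ : ∀ t : ℝ, HasDerivAt Ω (pbar t) t)
    (hpbar : ∀ t : ℝ, HasDerivAt pbar (-(p t)) t) :
    ∀ t : ℝ,
      HasDerivAt (deriv (deriv Ω)) (crossProduct (Ω t) (deriv (deriv Ω) t)) t := by
  intro t
  rw [deriv_deriv_eq_of_hasDerivAt hΩ hpbar, map_neg]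
  exact (hp t).neg
end
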